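/- Size-reduction lemma: assuming ⟦A_max⟧ ≤ ⟦A_min⟧, there exists a computable natural number k (one may take k = (4|Q|)^{|Q|}) such that for every productive-set P_0 ∈ Reachable and every term s of height greater than k, there exists a term t with size(t) < size(s) such that t refines s for P_0 with some shift x ∈ ℝ. -/

import Mathlib

/-- A ranked alphabet: symbols with arities. -/
structure RankedAlphabet where
  symb : Type
  ar : symb → ℕ

/-- Terms (finite ranked trees) over a ranked alphabet. -/
inductive Term (A : RankedAlphabet) : Type where
  | node (a : A.symb) (ts : Fin (A.ar a) → Term A) : Term A

/-- Height of a term: length of the longest branch. -/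
def Term.height {A : RankedAlphabet} : Term A → ℕ
  | .node _ ts => Finset.univ.sup fun i => (ts i).height + 1

/-- Size of a term: number of nodes. -/
def Term.size {A : RankedAlphabet} : Term A → ℕ
  | .node _ ts => 1 + ∑ i, (ts i).size

/-- A nondeterministic tree automaton with real weights on transitions and final states. -/
structure WTA (A : RankedAlphabet) (Q : Type) where
  trans : (a : A.symb) → (Fin (A.ar a) → Q) → Q → Prop
  wt : (a : A.symb) → (Fin (A.ar a) → Q) → Q → ℝ
  final : Q → Prop
  fwt : Q → ℝ

/-- Runs of an automaton over a term, reaching a given state at the root. -/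
inductive RunOf {A : RankedAlphabet} {Q : Type} (M : WTA A Q) : Term A → Q → Type where
  | node (a : A.symb) (ts : Fin (A.ar a) → Term A) (qs : Fin (A.ar a) → Q) (q : Q)
      (hq : M.trans a qs q) (rs : ∀ i, RunOf M (ts i) (qs i)) : RunOf M (.node a ts) q

/-- The weight of a run: sum of the weights of the transitions used. -/
def RunOf.wt {A : RankedAlphabet} {Q : Type} {M : WTA A Q} :
    {t : Term A} → {q : Q} → RunOf M t q → ℝ
  | _, _, .node a _ qs q _ rs => (∑ i, (rs i).wt) + M.wt a qs q

/-- Contexts: terms with exactly one hole. -/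
inductive Ctx (A : RankedAlphabet) : Type where
  | hole : Ctx A
  | node (a : A.symb) (i : Fin (A.ar a)) (c : Ctx A) (ts : Fin (A.ar a) → Term A) : Ctx A

/-- Plugging a term into the hole of a context. -/
def Ctx.plug {A : RankedAlphabet} : Ctx A → Term A → Term A
  | .hole, t => t
  | .node a i c ts, t => .node a (Function.update ts i (c.plug t))

/-- Composition of contexts: plugging the second context into the hole of the first. -/
def Ctx.comp {A : RankedAlphabet} : Ctx A → Ctx A → Ctx A
  | .hole, d => d
  | .node a i c ts, d => .node a i (c.comp d) ts

/-- Iterated composition of a context with itself. -/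
def Ctx.pow {A : RankedAlphabet} (m : Ctx A) : ℕ → Ctx A
  | 0 => .hole
  | n + 1 => m.comp (m.pow n)

/-- Runs over a context, from a state (at the hole) to a state (at the root). -/
inductive CRun {A : RankedAlphabet} {Q : Type} (M : WTA A Q) : Ctx A → Q → Q → Type where
  | hole (p : Q) : CRun M .hole p p
  | node (a : A.symb) (i : Fin (A.ar a)) (c : Ctx A) (ts : Fin (A.ar a) → Term A)
      (qs : Fin (A.ar a) → Q) (p q : Q)
      (hq : M.trans a qs q)
      (hc : CRun M c p (qs i))
      (rs : ∀ j, j ≠ i → RunOf M (ts j) (qs j)) : CRun M (.node a i c ts) p q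

/-- The weight of a run over a context. -/
def CRun.wt {A : RankedAlphabet} {Q : Type} {M : WTA A Q} :
    {c : Ctx A} → {p q : Q} → CRun M c p q → ℝ
  | _, _, _, .hole _ => 0
  | _, _, _, .node a i _ _ qs _ q _ hc rs =>
      (∑ j : {j // j ≠ i}, (rs j.1 j.2).wt) + M.wt a qs q + hc.wt

/-- Gluing a run over a context with a run over a term yields a run over the plugged term. -/
def CRun.glue {A : RankedAlphabet} {Q : Type} {M : WTA A Q} {t : Term A} :
    {c : Ctx A} → {p q : Q} → CRun M c p q → RunOf M t p → RunOf M (c.plug t) q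
  | _, _, _, .hole _, r => r
  | _, _, _, .node a i c ts qs _ q hq hc rs, r =>
      .node a (Function.update ts i (c.plug t)) qs q hq
        (fun j =>
          if h : j = i then
            cast (by subst h; rw [Function.update_self]) (CRun.glue hc r)
          else
            cast (congrArg (fun s => RunOf M s (qs j))
              (Function.update_of_ne h (c.plug t) ts).symm) (rs j h))

/-- Gluing runs over composed contexts. -/
def CRun.cglue {A : RankedAlphabet} {Q : Type} {M : WTA A Q} {d : Ctx A} {p : Q} :
    {c : Ctx A} → {q r : Q} → CRun M c q r → CRun M d p q → CRun M (c.comp d) p r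
  | _, _, _, .hole _, rd => rd
  | _, _, _, .node a i c ts qs _ r hq hc rs, rd =>
      .node a i (c.comp d) ts qs p r hq (hc.cglue rd) rs

/-- The `n`-fold iteration of a loop run over a context. -/
def CRun.pow {A : RankedAlphabet} {Q : Type} {M : WTA A Q} {m : Ctx A} {q : Q}
    (σ : CRun M m q q) : (n : ℕ) → CRun M (m.pow n) q q
  | 0 => .hole q
  | n + 1 => σ.cglue (σ.pow n)

/-- `x` is the weight of some accepting run of `M` over `t`
(weight of the run plus the final-state weight). -/
def AccWeight {A : RankedAlphabet} {Q : Type} (M : WTA A Q) (t : Term A) (x : ℝ) : Prop :=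
  ∃ (q : Q) (r : RunOf M t q), M.final q ∧ r.wt + M.fwt q = x

/-- `M` has some accepting run over `t`. -/
def HasAcc {A : RankedAlphabet} {Q : Type} (M : WTA A Q) (t : Term A) : Prop :=
  ∃ x, AccWeight M t x

/-- `f` is the max-plus semantics of `M`: `f t = ⊥` iff there is no accepting run,
and otherwise `f t` is the maximum weight of an accepting run. -/
def ComputesMax {A : RankedAlphabet} {Q : Type} (M : WTA A Q) (f : Term A → Option ℝ) : Prop :=
  ∀ t, (f t = none ↔ ¬ HasAcc M t) ∧
    ∀ x, f t = some x → AccWeight M t x ∧ ∀ y, AccWeight M t y → y ≤ x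

/-- `f` is the min-plus semantics of `M`. -/
def ComputesMin {A : RankedAlphabet} {Q : Type} (M : WTA A Q) (f : Term A → Option ℝ) : Prop :=
  ∀ t, (f t = none ↔ ¬ HasAcc M t) ∧
    ∀ x, f t = some x → AccWeight M t x ∧ ∀ y, AccWeight M t y → x ≤ y

/-- An automaton is unambiguous if every term has at most one accepting run. -/
def Unambiguous {A : RankedAlphabet} {Q : Type} (M : WTA A Q) : Prop :=
  ∀ (t : Term A) (q q' : Q) (r : RunOf M t q) (r' : RunOf M t q'),
    M.final q → M.final q' → q = q' ∧ HEq r r'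

/-- The order on `ℝ ∪ {⊥}` in which `⊥` is comparable only with itself. -/
def OLe : Option ℝ → Option ℝ → Prop
  | none, none => True
  | some x, some y => x ≤ y
  | _, _ => False

/-- Shifting a value of `ℝ ∪ {⊥}` by a real number. -/
def oshift (u : Option ℝ) (x : ℝ) : Option ℝ := u.map (· + x)

/-- The set of states reachable at the root by some run over `t`. -/
def reachSet {A : RankedAlphabet} {Q : Type} (M : WTA A Q) (t : Term A) : Set Q :=
  {q | Nonempty (RunOf M t q)}

/-- The set of states at the hole from which there is an accepting run over the context `c`. -/
def prodSet {A : RankedAlphabet} {Q : Type} (M : WTA A Q) (c : Ctx A) : Set Q :=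
  {p | ∃ q, M.final q ∧ Nonempty (CRun M c p q)}

section Bi
variable {A : RankedAlphabet} {Q1 Q2 : Type} (M1 : WTA A Q1) (M2 : WTA A Q2)

/-- Reachable states of the disjoint union of the two automata. -/
def biReach (t : Term A) : Set (Q1 ⊕ Q2) :=
  Sum.inl '' reachSet M1 t ∪ Sum.inr '' reachSet M2 t

/-- Productive states of the disjoint union of the two automata. -/
def biProd (c : Ctx A) : Set (Q1 ⊕ Q2) :=
  Sum.inl '' prodSet M1 c ∪ Sum.inr '' prodSet M2 c

/-- Final states of the disjoint union of the two automata. -/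
def biFinal : Set (Q1 ⊕ Q2) :=
  Sum.inl '' {q | M1.final q} ∪ Sum.inr '' {q | M2.final q}

/-- Transition relation of the disjoint union of the two automata. -/
def biTrans (a : A.symb) (qs : Fin (A.ar a) → Q1 ⊕ Q2) (q : Q1 ⊕ Q2) : Prop :=
  (∃ (qs' : Fin (A.ar a) → Q1) (q' : Q1),
      qs = Sum.inl ∘ qs' ∧ q = Sum.inl q' ∧ M1.trans a qs' q') ∨
  (∃ (qs' : Fin (A.ar a) → Q2) (q' : Q2),
      qs = Sum.inr ∘ qs' ∧ q = Sum.inr q' ∧ M2.trans a qs' q')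

/-- The family `Reachable` of sets of states of the form `Reach(t)`. -/
def ReachableSets : Set (Set (Q1 ⊕ Q2)) := {S | ∃ t, biReach M1 M2 t = S}

/-- The family `Productive` of sets of states of the form `Prod(c)`. -/
def ProductiveSets : Set (Set (Q1 ⊕ Q2)) := {S | ∃ c, biProd M1 M2 c = S}

/-- `t` refines `s` for `P` with shift `x`. -/
def Refines (P : Set (Q1 ⊕ Q2)) (t s : Term A) (x : ℝ) : Prop :=
  biReach M1 M2 s = biReach M1 M2 t ∧
  (∀ p : Q1, Sum.inl p ∈ P → ∀ ρ : RunOf M1 s p, ∃ ρ' : RunOf M1 t p, ρ.wt ≤ ρ'.wt + x) ∧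
  (∀ q : Q2, Sum.inr q ∈ P → ∀ τ : RunOf M2 s q, ∃ τ' : RunOf M2 t q, τ'.wt + x ≤ τ.wt)

end Bi

/-- Transitions of the product automaton `A_pro`, relative to a transition relation `Δ`. -/
def ProTrans {A : RankedAlphabet} {Q : Type}
    (Δ : ∀ a : A.symb, (Fin (A.ar a) → Q) → Q → Prop) (a : A.symb)
    (RPs : Fin (A.ar a) → Set Q × Set Q) (RP : Set Q × Set Q) : Prop :=
  RP.1 = {r | ∃ rs, Δ a rs r ∧ ∀ j, rs j ∈ (RPs j).1} ∧
  ∀ i, (RPs i).2 =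
    {ri | ∃ rs p, Δ a rs p ∧ rs i = ri ∧ (∀ j, j ≠ i → rs j ∈ (RPs j).1) ∧ p ∈ RP.2}

/-!
Follow a longest branch of `s`, and for every state fix a run of `s` reaching it that is of
maximal weight (for `A_max`) or of minimal weight (for `A_min`). Once the height exceeds the
number of possible profiles of a level (the reach set of the subterm there and the states the
fixed runs pass through), two levels share a profile, so `s = C[D[u]]` with every fixed run
entering and leaving `D` in the same state. Cutting out `D` gives the smaller term `C[u]` with the
same reach set, and each fixed run loses the weight of its `D`-loop. Pumping `D` instead and
applying `⟦A_max⟧ ≤ ⟦A_min⟧` to `d[C[Dᵐ[u]]]` shows that each productive max-loop weighs at most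
each productive min-loop, so a shift lying between the two families of loop weights works.
-/

lemma le_of_forall_nat_add_mul_le {x y a b : ℝ} (h : ∀ n : ℕ, a + n * x ≤ b + n * y) : x ≤ y := by
  by_contra! hxy
  obtain ⟨n, hn⟩ := exists_nat_gt ((b - a) / (x - y))
  rw [div_lt_iff₀ (by linarith)] at hn
  nlinarith [h n]

lemma exists_forall_le_forall_ge {S T : Set ℝ} (hS : BddAbove S) (hT : BddBelow T)
    (h : ∀ x ∈ S, ∀ y ∈ T, x ≤ y) : ∃ z, (∀ x ∈ S, x ≤ z) ∧ ∀ y ∈ T, z ≤ y := by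
  rcases S.eq_empty_or_nonempty with rfl | hne
  · exact ⟨sInf T, by simp, fun y hy => csInf_le hT hy⟩
  · exact ⟨sSup S, fun x hx => le_csSup hS hx, fun y hy => csSup_le hne fun x hx => h x hx y hy⟩

lemma exists_lt_map_eq_of_card_le {β : Type*} [Finite β] (f : ℕ → β) {n : ℕ}
    (hn : Nat.card β ≤ n) : ∃ a b, a < b ∧ b ≤ n ∧ f a = f b := by
  have := Fintype.ofFinite β
  obtain ⟨i, j, hij, h⟩ := Fintype.exists_ne_map_eq_of_card_lt (fun i : Fin (n + 1) => f i)
    (by rw [Fintype.card_fin, ← Nat.card_eq_fintype_card]; omega)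
  rcases lt_or_gt_of_ne (Fin.val_ne_of_ne hij) with hlt | hlt
  · exact ⟨i, j, hlt, by omega, h⟩
  · exact ⟨j, i, hlt, by omega, h.symm⟩

section Runs

variable {A : RankedAlphabet} {Q : Type} {M : WTA A Q}

lemma RunOf.wt_cast {t t' : Term A} {q q' : Q} (ht : t = t') (hq : q = q')
    (e : RunOf M t q = RunOf M t' q') (r : RunOf M t q) : (cast e r).wt = r.wt := by
  subst ht hq
  rfl

lemma CRun.wt_glue {t : Term A} {c : Ctx A} {p q : Q} (σ : CRun M c p q) (r : RunOf M t p) :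
    (σ.glue r).wt = r.wt + σ.wt := by
  induction σ with
  | hole => exact (add_zero _).symm
  | node a i c ts qs p q hq hc rs ih =>
    simp only [CRun.glue, RunOf.wt, CRun.wt]
    rw [Fintype.sum_eq_add_sum_subtype_ne _ i, dif_pos rfl,
      RunOf.wt_cast (Function.update_self i (c.plug t) ts).symm rfl, ih]
    rw [Finset.sum_congr rfl (g := fun j : {j // j ≠ i} => (rs j.1 j.2).wt) fun j _ => by
      rw [dif_neg j.2, RunOf.wt_cast (Function.update_of_ne j.2 (c.plug t) ts).symm rfl]]
    ring

lemma CRun.wt_cglue {c d : Ctx A} {p q r : Q} (σ : CRun M c q r) (τ : CRun M d p q) :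
    (σ.cglue τ).wt = σ.wt + τ.wt := by
  induction σ with
  | hole => exact (zero_add _).symm
  | node a i c ts qs p' q hq hc rs ih =>
    simp only [CRun.cglue, CRun.wt, ih]
    ring

lemma CRun.wt_pow {m : Ctx A} {q : Q} (σ : CRun M m q q) (n : ℕ) : (σ.pow n).wt = n * σ.wt := by
  induction n with
  | zero => simp [CRun.pow, CRun.wt]
  | succ n ih =>
    change (σ.cglue (σ.pow n)).wt = _
    rw [CRun.wt_cglue, ih]
    push_cast
    ring

lemma RunOf.exists_split {s u : Term A} {c : Ctx A} {q : Q} (hs : s = c.plug u)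
    (r : RunOf M s q) :
    ∃ (p : Q) (σ : CRun M c p q) (ρ : RunOf M u p), r.wt = σ.wt + ρ.wt := by
  subst hs
  induction c generalizing q with
  | hole => exact ⟨q, CRun.hole q, r, (zero_add _).symm⟩
  | node a i c ts ih =>
    cases r with
    | node _ _ qs q hq rs =>
      have hi : Function.update ts i (c.plug u) i = c.plug u := Function.update_self _ _ _
      obtain ⟨p, σ, ρ, hw⟩ := ih (cast (by rw [hi]) (rs i))
      refine ⟨p, CRun.node a i c ts qs p q hq σ
        (fun j hj => cast (by rw [Function.update_of_ne hj]) (rs j)), ρ, ?_⟩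
      rw [RunOf.wt_cast hi rfl] at hw
      simp only [RunOf.wt, CRun.wt, Fintype.sum_eq_add_sum_subtype_ne _ i, hw]
      rw [Finset.sum_congr rfl (g := fun j : {j // j ≠ i} => (rs j.1).wt) fun j _ =>
        RunOf.wt_cast (Function.update_of_ne j.2 (c.plug u) ts) rfl _ _]
      ring

lemma CRun.accWeight_glue {d : Ctx A} {u : Term A} {p q : Q} (hq : M.final q)
    (δ : CRun M d p q) (ρ : RunOf M u p) : AccWeight M (d.plug u) (ρ.wt + δ.wt + M.fwt q) :=
  ⟨q, δ.glue ρ, hq, by rw [CRun.wt_glue]⟩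

lemma mem_reachSet_plug {c : Ctx A} {u : Term A} {q : Q} :
    q ∈ reachSet M (c.plug u) ↔ ∃ p ∈ reachSet M u, Nonempty (CRun M c p q) := by
  constructor
  · rintro ⟨r⟩
    obtain ⟨p, σ, ρ, -⟩ := r.exists_split rfl
    exact ⟨p, ⟨ρ⟩, ⟨σ⟩⟩
  · rintro ⟨p, ⟨ρ⟩, ⟨σ⟩⟩
    exact ⟨σ.glue ρ⟩

lemma reachSet_plug_congr {u u' : Term A} (h : reachSet M u = reachSet M u') (c : Ctx A) :
    reachSet M (c.plug u) = reachSet M (c.plug u') := by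
  ext q
  simp only [mem_reachSet_plug, h]

lemma RunOf.finite_range_wt [Finite Q] (t : Term A) (q : Q) :
    (Set.range fun r : RunOf M t q => r.wt).Finite := by
  induction t generalizing q with
  | node a ts ih =>
    refine Set.Finite.subset (Set.finite_iUnion fun qs : Fin (A.ar a) → Q =>
      (Set.Finite.pi fun i => ih i (qs i)).image fun ws => (∑ i, ws i) + M.wt a qs q) ?_
    rintro _ ⟨⟨_, _, qs, _, _, rs⟩, rfl⟩
    exact Set.mem_iUnion.mpr ⟨qs, fun i => (rs i).wt, fun i _ => ⟨rs i, rfl⟩, rfl⟩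

lemma RunOf.exists_max_wt [Finite Q] {t : Term A} {q : Q} (h : q ∈ reachSet M t) :
    ∃ θ : RunOf M t q, ∀ θ' : RunOf M t q, θ'.wt ≤ θ.wt := by
  have : Nonempty (RunOf M t q) := h
  obtain ⟨_, ⟨θ, rfl⟩, hmax⟩ :=
    Set.exists_max_image _ id (RunOf.finite_range_wt (M := M) t q) (Set.range_nonempty _)
  exact ⟨θ, fun θ' => hmax _ ⟨θ', rfl⟩⟩

lemma RunOf.exists_min_wt [Finite Q] {t : Term A} {q : Q} (h : q ∈ reachSet M t) :
    ∃ θ : RunOf M t q, ∀ θ' : RunOf M t q, θ.wt ≤ θ'.wt := by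
  have : Nonempty (RunOf M t q) := h
  obtain ⟨_, ⟨θ, rfl⟩, hmin⟩ :=
    Set.exists_min_image _ id (RunOf.finite_range_wt (M := M) t q) (Set.range_nonempty _)
  exact ⟨θ, fun θ' => hmin _ ⟨θ', rfl⟩⟩

end Runs

section Chains

variable {A : RankedAlphabet}

lemma Ctx.comp_plug (c d : Ctx A) (u : Term A) : (c.comp d).plug u = c.plug (d.plug u) := by
  induction c with
  | hole => rfl
  | node a i c ts ih => simp [Ctx.comp, Ctx.plug, ih]

lemma Ctx.size_plug_lt (c : Ctx A) {u u' : Term A} (h : u.size < u'.size) :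
    (c.plug u).size < (c.plug u').size := by
  induction c with
  | hole => exact h
  | node a i c ts ih =>
    simp only [Ctx.plug, Term.size, add_lt_add_iff_left]
    refine Finset.sum_lt_sum (fun j _ => ?_) ⟨i, Finset.mem_univ i, by simpa using ih⟩
    rcases eq_or_ne j i with rfl | hj
    · simpa using ih.le
    · simp [Function.update_of_ne hj]

lemma Term.size_lt_of_child {a : A.symb} (ts : Fin (A.ar a) → Term A) (i : Fin (A.ar a)) :
    (ts i).size < (Term.node a ts).size := by
  have := Finset.single_le_sum (f := fun j => (ts j).size) (fun j _ => Nat.zero_le _)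
    (Finset.mem_univ i)
  simp only [Term.size]
  omega

lemma Term.exists_chain (n : ℕ) (s : Term A) (hn : n ≤ s.height) :
    ∃ (v : ℕ → Term A) (c : ℕ → Ctx A), v 0 = s ∧ (∀ t < n, v t = (c t).plug (v (t + 1))) ∧
      StrictAntiOn (fun t => (v t).size) (Set.Iic n) := by
  induction n generalizing s with
  | zero => exact ⟨fun _ => s, fun _ => .hole, rfl, by simp, by simp [StrictAntiOn]⟩
  | succ n ih =>
    obtain ⟨a, ts⟩ := s
    obtain ⟨i, -, hi⟩ : ∃ i ∈ Finset.univ, n < (ts i).height + 1 :=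
      Finset.lt_sup_iff.mp (Nat.lt_of_lt_of_le n.lt_succ_self hn)
    obtain ⟨v, c, hv0, hv, hsize⟩ := ih (ts i) (by omega)
    have hstep : Term.node a ts = (Ctx.node a i .hole ts).plug (v 0) := by
      rw [hv0]
      exact congrArg _ (Function.update_eq_self i ts).symm
    refine ⟨fun | 0 => .node a ts | t + 1 => v t, fun | 0 => .node a i .hole ts | t + 1 => c t,
      rfl, ?_, strictAntiOn_Iic_of_succ_lt ?_⟩
    · rintro (_ | t) ht
      · exact hstep
      · exact hv t (by omega)
    · rintro (_ | t) ht
      · simpa [hv0] using Term.size_lt_of_child ts i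
      · exact hsize (Set.mem_Iic.mpr (by omega)) (Set.mem_Iic.mpr (by omega)) t.lt_succ_self

def Ctx.chain (c : ℕ → Ctx A) (a : ℕ) : ℕ → Ctx A
  | 0 => .hole
  | l + 1 => (c a).comp (Ctx.chain c (a + 1) l)

lemma Ctx.plug_chain {v : ℕ → Term A} {c : ℕ → Ctx A} {n : ℕ}
    (hv : ∀ t < n, v t = (c t).plug (v (t + 1))) (l : ℕ) :
    ∀ a b, a + l = b → b ≤ n → v a = (Ctx.chain c a l).plug (v b) := by
  induction l with
  | zero =>
    rintro a _ rfl -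
    rfl
  | succ l ih =>
    rintro a b rfl hb
    rw [Ctx.chain, Ctx.comp_plug, ← ih (a + 1) _ (by omega) hb]
    exact hv a (by omega)

end Chains

section Loops

variable {A : RankedAlphabet} {Q : Type} {M : WTA A Q}

lemma CRun.exists_chain {c : ℕ → Ctx A} {n : ℕ} {P : ℕ → Q} {w : ℕ → ℝ}
    (hstep : ∀ t < n, ∃ σ : CRun M (c t) (P (t + 1)) (P t), w t = σ.wt + w (t + 1)) (l : ℕ) :
    ∀ a b, a + l = b → b ≤ n →
      ∃ σ : CRun M (Ctx.chain c a l) (P b) (P a), w a = σ.wt + w b := by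
  induction l with
  | zero =>
    rintro a _ rfl -
    exact ⟨CRun.hole (P a), by simp [CRun.wt]⟩
  | succ l ih =>
    rintro a b rfl hb
    obtain ⟨σ₁, hσ₁⟩ := hstep a (by omega)
    obtain ⟨σ₂, hσ₂⟩ := ih (a + 1) _ (by omega) hb
    refine ⟨σ₁.cglue σ₂, ?_⟩
    change w a = (σ₁.cglue σ₂ : CRun M ((c a).comp _) _ _).wt + _
    rw [CRun.wt_cglue, hσ₁, hσ₂, add_assoc]

/-- `P t` is the state of `θ` at the root of `v t`, and `w t` the weight of its part over `v t`. -/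
lemma RunOf.exists_chain_split {v : ℕ → Term A} {c : ℕ → Ctx A} {n : ℕ}
    (hv : ∀ t < n, v t = (c t).plug (v (t + 1))) {q : Q} (θ : RunOf M (v 0) q) :
    ∃ (P : ℕ → Q) (w : ℕ → ℝ), P 0 = q ∧ w 0 = θ.wt ∧
      (∀ t ≤ n, ∃ ρ : RunOf M (v t) (P t), ρ.wt = w t) ∧
      ∀ t < n, ∃ σ : CRun M (c t) (P (t + 1)) (P t), w t = σ.wt + w (t + 1) := by
  induction n with
  | zero =>
    refine ⟨fun _ => q, fun _ => θ.wt, rfl, rfl, fun t ht => ?_, by simp⟩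
    obtain rfl : t = 0 := by omega
    exact ⟨θ, rfl⟩
  | succ n ih =>
    obtain ⟨P, w, hP0, hw0, hρ, hσ⟩ := ih fun t ht => hv t (by omega)
    obtain ⟨ρn, hρn⟩ := hρ n le_rfl
    obtain ⟨p, σ, ρ, hsplit⟩ := ρn.exists_split (hv n (by omega))
    have hne : ∀ t ≤ n, t ≠ n + 1 := fun t ht => by omega
    refine ⟨Function.update P (n + 1) p, Function.update w (n + 1) ρ.wt,
      by rw [Function.update_of_ne (hne 0 n.zero_le), hP0],
      by rw [Function.update_of_ne (hne 0 n.zero_le), hw0], fun t ht => ?_, fun t ht => ?_⟩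
    · rcases Nat.lt_or_eq_of_le ht with ht | rfl
      · rw [Function.update_of_ne (hne t (by omega)), Function.update_of_ne (hne t (by omega))]
        exact hρ t (by omega)
      · rw [Function.update_self, Function.update_self]
        exact ⟨ρ, rfl⟩
    · rcases Nat.lt_or_eq_of_le (Nat.le_of_lt_succ ht) with ht | rfl
      · rw [Function.update_of_ne (hne t (by omega)), Function.update_of_ne (hne (t + 1) ht),
          Function.update_of_ne (hne t (by omega)), Function.update_of_ne (hne (t + 1) ht)]
        exact hσ t ht
      · rw [Function.update_self, Function.update_of_ne (hne t le_rfl), Function.update_self,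
          Function.update_of_ne (hne t le_rfl)]
        exact ⟨σ, by rw [← hρn, hsplit]⟩

/-- `w` is the weight of a run over `C[D[u]]` reaching `p` whose states at the holes of `C` and
of `D` coincide, so that the part over `D` can be repeated or removed. -/
def HasLoopRun (M : WTA A Q) (C D : Ctx A) (u : Term A) (p : Q) (w : ℝ) : Prop :=
  ∃ (r : Q) (σC : CRun M C r p) (σD : CRun M D r r) (ρ : RunOf M u r), w = σC.wt + σD.wt + ρ.wt

lemma HasLoopRun.of_eq {C D : Ctx A} {u : Term A} {p r r' : Q} (h : r = r')
    (σC : CRun M C r p) (σD : CRun M D r' r) (ρ : RunOf M u r') :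
    HasLoopRun M C D u p (σC.wt + σD.wt + ρ.wt) := by
  subst h
  exact ⟨r, σC, σD, ρ, rfl⟩

lemma HasLoopRun.exists_pumped {C D : Ctx A} {u : Term A} {p : Q} {w : ℝ}
    (h : HasLoopRun M C D u p w) :
    ∃ lam base : ℝ, w = base + lam ∧
      ∀ m : ℕ, ∃ ρ : RunOf M (C.plug ((D.pow m).plug u)) p, ρ.wt = base + m * lam := by
  obtain ⟨r, σC, σD, ρ, rfl⟩ := h
  refine ⟨σD.wt, σC.wt + ρ.wt, by ring, fun m => ⟨σC.glue ((σD.pow m).glue ρ), ?_⟩⟩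
  rw [CRun.wt_glue, CRun.wt_glue, CRun.wt_pow]
  ring

lemma RunOf.exists_loop_states {v : ℕ → Term A} {c : ℕ → Ctx A} {n : ℕ}
    (hv : ∀ t < n, v t = (c t).plug (v (t + 1))) {q : Q} (θ : RunOf M (v 0) q) :
    ∃ P : ℕ → Q, ∀ a b, a ≤ b → b ≤ n → P a = P b →
      HasLoopRun M (Ctx.chain c 0 a) (Ctx.chain c a (b - a)) (v b) q θ.wt := by
  obtain ⟨P, w, rfl, hw0, hρ, hstep⟩ := θ.exists_chain_split hv
  refine ⟨P, fun a b hab hb hPab => ?_⟩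
  obtain ⟨σC, hσC⟩ := CRun.exists_chain hstep a 0 a (zero_add a) (by omega)
  obtain ⟨σD, hσD⟩ := CRun.exists_chain hstep (b - a) a b (by omega) hb
  obtain ⟨ρ, hρ⟩ := hρ b hb
  convert HasLoopRun.of_eq hPab σC σD ρ using 1
  rw [← hw0, hσC, hσD, hρ, add_assoc]

lemma exists_forall_loop_states {v : ℕ → Term A} {c : ℕ → Ctx A} {n : ℕ}
    (hv : ∀ t < n, v t = (c t).plug (v (t + 1))) {R : Q → ℝ → Prop}
    (hR : ∀ p ∈ reachSet M (v 0), ∃ θ : RunOf M (v 0) p, R p θ.wt) :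
    ∃ P : Q → ℕ → Q, ∀ p ∈ reachSet M (v 0), ∃ w, R p w ∧ ∀ a b, a ≤ b → b ≤ n →
      P p a = P p b → HasLoopRun M (Ctx.chain c 0 a) (Ctx.chain c a (b - a)) (v b) p w := by
  have : ∀ p, ∃ P : ℕ → Q, p ∈ reachSet M (v 0) → ∃ w, R p w ∧ ∀ a b, a ≤ b → b ≤ n →
      P a = P b → HasLoopRun M (Ctx.chain c 0 a) (Ctx.chain c a (b - a)) (v b) p w := by
    intro p
    by_cases hp : p ∈ reachSet M (v 0)
    · obtain ⟨θ, hθ⟩ := hR p hp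
      obtain ⟨P, hP⟩ := θ.exists_loop_states hv
      exact ⟨P, fun _ => ⟨θ.wt, hθ, hP⟩⟩
    · exact ⟨fun _ => p, fun h => absurd h hp⟩
  choose P hP using this
  exact ⟨P, hP⟩

def HasMaxLoopRuns (M : WTA A Q) (s : Term A) (C D : Ctx A) (u : Term A) : Prop :=
  ∀ p ∈ reachSet M s, ∃ w, HasLoopRun M C D u p w ∧ ∀ θ : RunOf M s p, θ.wt ≤ w

def HasMinLoopRuns (M : WTA A Q) (s : Term A) (C D : Ctx A) (u : Term A) : Prop :=
  ∀ p ∈ reachSet M s, ∃ w, HasLoopRun M C D u p w ∧ ∀ θ : RunOf M s p, w ≤ θ.wt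

lemma HasMaxLoopRuns.exists_pumped {s : Term A} {C D : Ctx A} {u : Term A}
    (h : HasMaxLoopRuns M s C D u) :
    ∀ p ∈ reachSet M s, ∃ lam base : ℝ, (∀ θ : RunOf M s p, θ.wt ≤ base + lam) ∧
      ∀ m : ℕ, ∃ ρ : RunOf M (C.plug ((D.pow m).plug u)) p, ρ.wt = base + m * lam := by
  intro p hp
  obtain ⟨w, hloop, hopt⟩ := h p hp
  obtain ⟨lam, base, rfl, hpump⟩ := hloop.exists_pumped
  exact ⟨lam, base, hopt, hpump⟩

lemma HasMinLoopRuns.exists_pumped {s : Term A} {C D : Ctx A} {u : Term A}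
    (h : HasMinLoopRuns M s C D u) :
    ∀ p ∈ reachSet M s, ∃ lam base : ℝ, (∀ θ : RunOf M s p, base + lam ≤ θ.wt) ∧
      ∀ m : ℕ, ∃ ρ : RunOf M (C.plug ((D.pow m).plug u)) p, ρ.wt = base + m * lam := by
  intro p hp
  obtain ⟨w, hloop, hopt⟩ := h p hp
  obtain ⟨lam, base, rfl, hpump⟩ := hloop.exists_pumped
  exact ⟨lam, base, hopt, hpump⟩

end Loops

section Semantics

variable {A : RankedAlphabet} {Q1 Q2 : Type} {Mmax : WTA A Q1} {Mmin : WTA A Q2}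
  {f g : Term A → Option ℝ}

lemma AccWeight.le_of_computes (hf : ComputesMax Mmax f) (hg : ComputesMin Mmin g)
    (hle : ∀ t, OLe (f t) (g t)) {t : Term A} {x y : ℝ} (hx : AccWeight Mmax t x)
    (hy : AccWeight Mmin t y) : x ≤ y := by
  obtain ⟨F, hF⟩ := Option.ne_none_iff_exists'.mp fun h => (hf t).1.mp h ⟨x, hx⟩
  obtain ⟨G, hG⟩ := Option.ne_none_iff_exists'.mp fun h => (hg t).1.mp h ⟨y, hy⟩
  have hFG : F ≤ G := by simpa [hF, hG, OLe] using hle t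
  calc x ≤ F := ((hf t).2 F hF).2 x hx
    _ ≤ G := hFG
    _ ≤ y := ((hg t).2 G hG).2 y hy

/-- The semantic inequality at every iterate of a pumped loop bounds the slopes. -/
lemma le_of_pumped_runs (hf : ComputesMax Mmax f) (hg : ComputesMin Mmin g)
    (hle : ∀ t, OLe (f t) (g t)) {d : Ctx A} {p : Q1} {q : Q2} (hp : p ∈ prodSet Mmax d)
    (hq : q ∈ prodSet Mmin d) {s : ℕ → Term A} {lam mu base₁ base₂ : ℝ}
    (hmax : ∀ m : ℕ, ∃ ρ : RunOf Mmax (s m) p, ρ.wt = base₁ + m * lam)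
    (hmin : ∀ m : ℕ, ∃ τ : RunOf Mmin (s m) q, τ.wt = base₂ + m * mu) : lam ≤ mu := by
  obtain ⟨qf, hqf, ⟨δ⟩⟩ := hp
  obtain ⟨qf', hqf', ⟨δ'⟩⟩ := hq
  refine le_of_forall_nat_add_mul_le (a := base₁ + δ.wt + Mmax.fwt qf)
    (b := base₂ + δ'.wt + Mmin.fwt qf') fun m => ?_
  obtain ⟨ρ, hρ⟩ := hmax m
  obtain ⟨τ, hτ⟩ := hmin m
  have := (δ.accWeight_glue hqf ρ).le_of_computes hf hg hle (δ'.accWeight_glue hqf' τ)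
  rw [hρ, hτ] at this
  linarith

end Semantics

section Bi

variable {A : RankedAlphabet} {Q1 Q2 : Type} {M1 : WTA A Q1} {M2 : WTA A Q2}

@[simp]
lemma inl_mem_biProd {d : Ctx A} {p : Q1} : Sum.inl p ∈ biProd M1 M2 d ↔ p ∈ prodSet M1 d := by
  simp [biProd]

@[simp]
lemma inr_mem_biProd {d : Ctx A} {q : Q2} : Sum.inr q ∈ biProd M1 M2 d ↔ q ∈ prodSet M2 d := by
  simp [biProd]

lemma biReach_plug_congr {u u' : Term A} (h : biReach M1 M2 u = biReach M1 M2 u') (c : Ctx A) :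
    biReach M1 M2 (c.plug u) = biReach M1 M2 (c.plug u') := by
  have h₁ : reachSet M1 u = reachSet M1 u' := by
    ext x
    simpa [biReach] using Set.ext_iff.mp h (Sum.inl x)
  have h₂ : reachSet M2 u = reachSet M2 u' := by
    ext x
    simpa [biReach] using Set.ext_iff.mp h (Sum.inr x)
  simp only [biReach, reachSet_plug_congr h₁ c, reachSet_plug_congr h₂ c]

end Bi

theorem exists_loopRuns_of_height_lt {A : RankedAlphabet} {Q1 Q2 : Type} [Finite Q1] [Finite Q2]
    (Mmax : WTA A Q1) (Mmin : WTA A Q2) :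
    ∃ k : ℕ, ∀ s : Term A, k < s.height → ∃ (C D : Ctx A) (u : Term A),
      s = C.plug (D.plug u) ∧ u.size < (D.plug u).size ∧
      biReach Mmax Mmin (D.plug u) = biReach Mmax Mmin u ∧
      HasMaxLoopRuns Mmax s C D u ∧ HasMinLoopRuns Mmin s C D u := by
  refine ⟨Nat.card (Set (Q1 ⊕ Q2) × (Q1 → Q1) × (Q2 → Q2)), fun s hs => ?_⟩
  obtain ⟨v, c, rfl, hv, hsize⟩ := Term.exists_chain _ s hs.le
  obtain ⟨P₁, hP₁⟩ := exists_forall_loop_states (M := Mmax) hv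
    (R := fun p w => ∀ θ : RunOf Mmax (v 0) p, θ.wt ≤ w) fun _ hp => RunOf.exists_max_wt hp
  obtain ⟨P₂, hP₂⟩ := exists_forall_loop_states (M := Mmin) hv
    (R := fun q w => ∀ θ : RunOf Mmin (v 0) q, w ≤ θ.wt) fun _ hq => RunOf.exists_min_wt hq
  -- the profile of a level: reach set of its subterm and states of the chosen optimal runs there
  obtain ⟨a, b, hab, hb, heq⟩ := exists_lt_map_eq_of_card_le
    (fun t => (biReach Mmax Mmin (v t), fun p => P₁ p t, fun q => P₂ q t)) le_rfl
  simp only [Prod.mk.injEq, funext_iff] at heq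
  obtain ⟨hreach, hP₁ab, hP₂ab⟩ := heq
  have hva : v a = (Ctx.chain c a (b - a)).plug (v b) := Ctx.plug_chain hv _ a b (by omega) hb
  have h0a : v 0 = (Ctx.chain c 0 a).plug (v a) := Ctx.plug_chain hv a 0 a (zero_add a) (by omega)
  refine ⟨_, _, v b, hva ▸ h0a, hva ▸ hsize (Set.mem_Iic.mpr (by omega)) (Set.mem_Iic.mpr hb) hab,
    hva ▸ hreach, fun p hp => ?_, fun q hq => ?_⟩
  · obtain ⟨w, hopt, hloop⟩ := hP₁ p hp
    exact ⟨w, hloop a b hab.le hb (hP₁ab p), hopt⟩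
  · obtain ⟨w, hopt, hloop⟩ := hP₂ q hq
    exact ⟨w, hloop a b hab.le hb (hP₂ab q), hopt⟩

theorem exists_refines_of_loopRuns {A : RankedAlphabet} {Q1 Q2 : Type} [Finite Q1] [Finite Q2]
    {Mmax : WTA A Q1} {Mmin : WTA A Q2} {f g : Term A → Option ℝ}
    (hf : ComputesMax Mmax f) (hg : ComputesMin Mmin g) (hle : ∀ t, OLe (f t) (g t))
    (d : Ctx A) {C D : Ctx A} {u : Term A}
    (hreach : biReach Mmax Mmin (D.plug u) = biReach Mmax Mmin u)
    (hmax : HasMaxLoopRuns Mmax (C.plug (D.plug u)) C D u)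
    (hmin : HasMinLoopRuns Mmin (C.plug (D.plug u)) C D u) :
    ∃ x, Refines Mmax Mmin (biProd Mmax Mmin d) (C.plug u) (C.plug (D.plug u)) x := by
  choose! lam base₁ hopt₁ hpump₁ using hmax.exists_pumped
  choose! mu base₂ hopt₂ hpump₂ using hmin.exists_pumped
  obtain ⟨x, hx₁, hx₂⟩ := exists_forall_le_forall_ge
    (S := lam '' {p | p ∈ prodSet Mmax d ∧ p ∈ reachSet Mmax (C.plug (D.plug u))})
    (T := mu '' {q | q ∈ prodSet Mmin d ∧ q ∈ reachSet Mmin (C.plug (D.plug u))})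
    (Set.toFinite _).bddAbove (Set.toFinite _).bddBelow (by
      rintro _ ⟨p, ⟨hpd, hp⟩, rfl⟩ _ ⟨q, ⟨hqd, hq⟩, rfl⟩
      exact le_of_pumped_runs hf hg hle hpd hqd (hpump₁ p hp) (hpump₂ q hq))
  refine ⟨x, biReach_plug_congr hreach C, fun p hp θ => ?_, fun q hq θ => ?_⟩
  · have hr : p ∈ reachSet Mmax (C.plug (D.plug u)) := ⟨θ⟩
    obtain ⟨ρ, hρ⟩ : ∃ ρ : RunOf Mmax (C.plug u) p, ρ.wt = base₁ p + (0 : ℕ) * lam p :=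
      hpump₁ p hr 0
    have := hx₁ _ ⟨p, ⟨inl_mem_biProd.mp hp, hr⟩, rfl⟩
    refine ⟨ρ, ?_⟩
    simp only [Nat.cast_zero, zero_mul, add_zero] at hρ
    linarith [hopt₁ p hr θ]
  · have hr : q ∈ reachSet Mmin (C.plug (D.plug u)) := ⟨θ⟩
    obtain ⟨τ, hτ⟩ : ∃ τ : RunOf Mmin (C.plug u) q, τ.wt = base₂ q + (0 : ℕ) * mu q :=
      hpump₂ q hr 0
    have := hx₂ _ ⟨q, ⟨inr_mem_biProd.mp hq, hr⟩, rfl⟩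
    refine ⟨τ, ?_⟩
    simp only [Nat.cast_zero, zero_mul, add_zero] at hτ
    linarith [hopt₂ q hr θ]

/-- size-reduction lemma: assuming `⟦A_max⟧ ≤ ⟦A_min⟧`, there is a
`k ∈ ℕ` such that for every productive-set `P₀` and every term `s` of height greater
than `k`, some strictly smaller term `t` refines `s` for `P₀` with some shift `x`. -/
theorem size_reduction {A : RankedAlphabet} {Q1 Q2 : Type}
    [Fintype Q1] [Fintype Q2] (Mmax : WTA A Q1) (Mmin : WTA A Q2)
    (f g : Term A → Option ℝ)
    (hf : ComputesMax Mmax f) (hg : ComputesMin Mmin g)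
    (hle : ∀ t, OLe (f t) (g t)) :
    ∃ k : ℕ, ∀ P0 ∈ ProductiveSets Mmax Mmin, ∀ s : Term A, k < s.height →
      ∃ (t : Term A) (x : ℝ), t.size < s.size ∧ Refines Mmax Mmin P0 t s x := by
  obtain ⟨k, hk⟩ := exists_loopRuns_of_height_lt Mmax Mmin
  refine ⟨k, ?_⟩
  rintro P0 ⟨d, rfl⟩ s hs
  obtain ⟨C, D, u, rfl, hsize, hreach, hmax, hmin⟩ := hk s hs
  obtain ⟨x, hx⟩ := exists_refines_of_loopRuns hf hg hle d hreach hmax hmin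
  exact ⟨C.plug u, x, C.size_plug_lt hsize, hx⟩
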